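/- If v is a standard complex Gaussian random vector in ℂ^n, then E(‖v‖² log‖v‖) = n·ψ(n+1)/2, where ψ is the digamma function. -/

import Mathlib

open MeasureTheory

noncomputable def digamma (x : ℝ) : ℝ := deriv Real.Gamma x / Real.Gamma x

/-- The standard complex Gaussian measure on ℂ: real and imaginary parts
independent centered Gaussians of variance 1/2; density `(1/π) exp(-|z|²)`. -/
noncomputable def stdCGaussian : Measure ℂ :=
  volume.withDensity fun z => ENNReal.ofReal ((1 / Real.pi) * Real.exp (-(‖z‖ ^ 2)))

/-- Standard complex Gaussian vector in ℂ^n (i.i.d. coordinates). -/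
noncomputable def stdCGaussianVec (n : ℕ) : Measure (Fin n → ℂ) :=
  Measure.pi fun _ => stdCGaussian

/-- r×r random complex matrix with i.i.d. standard complex Gaussian entries. -/
noncomputable def stdCGaussianMat (r : ℕ) : Measure (Fin r → Fin r → ℂ) :=
  Measure.pi fun _ => Measure.pi fun _ => stdCGaussian

/-!
With density `π⁻ⁿ exp (-‖v‖²)` and `ℂⁿ` identified isometrically with `ℝ^d`, `d = 2n`, the
expectation is a radial integral. In polar coordinates it is `d · vol(Bᵈ)` times
`∫₀^∞ r^(d+1) log r e^(-r²) dr`, which the substitution `t = r²` turns into `Γ'(d/2 + 1) / 4`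
(differentiate `Γ(s) = ∫ t^(s-1) e^(-t) dt` under the integral sign); since
`vol(Bᵈ) = π^(d/2) / Γ(d/2 + 1)`, the powers of `π` cancel against `π⁻ⁿ`.
-/

open scoped ENNReal
open Real Set Module

namespace MeasureTheory

theorem lintegral_fin_nat_prod_eq_prod {n : ℕ} {E : Type*} [MeasurableSpace E]
    (μ : Fin n → Measure E) [∀ i, SigmaFinite (μ i)]
    {f : Fin n → E → ℝ≥0∞} (hf : ∀ i, Measurable (f i)) :
    ∫⁻ x, ∏ i, f i (x i) ∂Measure.pi μ = ∏ i, ∫⁻ x, f i x ∂μ i := by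
  induction n with
  | zero => simp
  | succ n ih =>
    have hmeas : Measurable fun x : Fin n → E ↦ ∏ i, f i.succ (x i) :=
      Finset.measurable_prod _ fun i _ ↦ (hf i.succ).comp (measurable_pi_apply i)
    calc ∫⁻ x, ∏ i, f i (x i) ∂Measure.pi μ
        = ∫⁻ x, f 0 x.1 * ∏ i : Fin n, f i.succ (x.2 i)
            ∂(μ 0).prod (Measure.pi fun i ↦ μ i.succ) := by
          rw [← (measurePreserving_piFinSuccAbove μ 0).symm.lintegral_comp_emb
            (MeasurableEquiv.measurableEmbedding _)]
          simp [Fin.prod_univ_succ]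
      _ = (∫⁻ x, f 0 x ∂μ 0) * ∏ i : Fin n, ∫⁻ x, f i.succ x ∂μ i.succ := by
          rw [lintegral_prod_mul (hf 0).aemeasurable hmeas.aemeasurable, ih _ fun i ↦ hf i.succ]
      _ = ∏ i, ∫⁻ x, f i x ∂μ i := (Fin.prod_univ_succ fun i ↦ ∫⁻ x, f i x ∂μ i).symm

theorem Measure.pi_withDensity {n : ℕ} {E : Type*} [MeasurableSpace E]
    (μ : Fin n → Measure E) [∀ i, SigmaFinite (μ i)]
    {f : Fin n → E → ℝ≥0∞} (hf : ∀ i, Measurable (f i))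
    [∀ i, SigmaFinite ((μ i).withDensity (f i))] :
    Measure.pi (fun i ↦ (μ i).withDensity (f i))
      = (Measure.pi μ).withDensity fun x ↦ ∏ i, f i (x i) := by
  refine Measure.pi_eq fun s hs ↦ ?_
  have hbox : (univ.pi s).indicator (fun x ↦ ∏ i, f i (x i))
      = fun x ↦ ∏ i, (s i).indicator (f i) (x i) := by
    ext x
    by_cases hx : ∀ i, x i ∈ s i
    · rw [indicator_of_mem (mem_univ_pi.mpr hx)]
      exact Finset.prod_congr rfl fun i _ ↦ (indicator_of_mem (hx i) _).symm
    · obtain ⟨i, hi⟩ := not_forall.mp hx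
      rw [indicator_of_notMem (mt mem_univ_pi.mp hx),
        Finset.prod_eq_zero (Finset.mem_univ i) (indicator_of_notMem hi _)]
  rw [withDensity_apply _ (MeasurableSet.univ_pi hs),
    ← lintegral_indicator (MeasurableSet.univ_pi hs), hbox,
    lintegral_fin_nat_prod_eq_prod μ fun i ↦ (hf i).indicator (hs i)]
  simp [withDensity_apply _ (hs _), lintegral_indicator (hs _)]

end MeasureTheory

theorem stdCGaussianVec_eq_withDensity (n : ℕ) :
    stdCGaussianVec n = volume.withDensity fun v : Fin n → ℂ ↦
      ENNReal.ofReal (π⁻¹ ^ n * exp (-∑ j, ‖v j‖ ^ 2)) := by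
  have hmeas : Measurable fun z : ℂ ↦ ENNReal.ofReal (1 / π * exp (-‖z‖ ^ 2)) := by fun_prop
  rw [stdCGaussianVec, stdCGaussian, Measure.pi_withDensity _ fun _ ↦ hmeas, volume_pi]
  congr with v
  rw [← ENNReal.ofReal_prod_of_nonneg fun j _ ↦ by positivity, Finset.prod_mul_distrib,
    ← exp_sum, Finset.sum_neg_distrib]
  simp

theorem integral_stdCGaussianVec (n : ℕ) (F : (Fin n → ℂ) → ℝ) :
    ∫ v, F v ∂stdCGaussianVec n = π⁻¹ ^ n * ∫ v, F v * exp (-∑ j, ‖v j‖ ^ 2) := by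
  rw [stdCGaussianVec_eq_withDensity, integral_withDensity_eq_integral_toReal_smul (by fun_prop)
    (.of_forall fun _ ↦ ENNReal.ofReal_lt_top), ← integral_const_mul]
  congr with v
  rw [ENNReal.toReal_ofReal (by positivity), smul_eq_mul]
  ring

theorem Real.hasDerivAt_Gamma_integral {x : ℝ} (hx : 0 < x) :
    HasDerivAt Gamma (∫ t in Ioi 0, t ^ (x - 1) * (log t * exp (-t))) x := by
  have hGamma : Complex.Gamma =ᶠ[nhds (x : ℂ)] Complex.GammaIntegral := by
    filter_upwards [(isOpen_lt continuous_const Complex.continuous_re).mem_nhds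
      (show (0 : ℝ) < (x : ℂ).re by simpa using hx)] with z hz using Complex.Gamma_eq_integral hz
  have hC := ((Complex.hasDerivAt_GammaIntegral (by simpa using hx)).congr_of_eventuallyEq
    hGamma).real_of_complex
  convert hC using 1
  · ext y
    rw [Complex.Gamma_ofReal, Complex.ofReal_re]
  · rw [← Complex.ofReal_re (∫ t in Ioi 0, _), ← integral_complex_ofReal]
    congr 1
    refine setIntegral_congr_fun measurableSet_Ioi fun t ht ↦ ?_
    push_cast [Complex.ofReal_cpow (le_of_lt ht)]
    rfl

theorem integral_Ioi_rpow_mul_log_mul_exp_neg_sq {s : ℝ} (hs : -1 < s) :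
    ∫ r in Ioi 0, r ^ s * log r * exp (-r ^ 2) = deriv Gamma ((s + 1) / 2) / 4 := by
  set g : ℝ → ℝ := fun t ↦ t ^ ((s + 1) / 2 - 1) * (log t * exp (-t)) / 4
  have hsubst : ∀ r ∈ Ioi (0 : ℝ),
      r ^ s * log r * exp (-r ^ 2) = (|2| * r ^ ((2 : ℝ) - 1)) • g (r ^ (2 : ℝ)) := by
    intro r hr
    have hr : 0 < r := hr
    simp only [g, smul_eq_mul]
    rw [← rpow_mul hr.le, log_rpow hr, rpow_two, show 2 * ((s + 1) / 2 - 1) = s - 1 by ring,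
      rpow_sub_one hr.ne' s, show (2 : ℝ) - 1 = 1 by norm_num, rpow_one, abs_two]
    field_simp
    ring
  rw [setIntegral_congr_fun measurableSet_Ioi hsubst, integral_comp_rpow_Ioi g two_ne_zero,
    integral_div, (hasDerivAt_Gamma_integral (by linarith)).deriv]

theorem integral_sq_norm_mul_log_norm_mul_exp_neg_sq_norm {E : Type*} [NormedAddCommGroup E]
    [InnerProductSpace ℝ E] [FiniteDimensional ℝ E] [MeasurableSpace E] [BorelSpace E] :
    ∫ x : E, ‖x‖ ^ 2 * log ‖x‖ * exp (-‖x‖ ^ 2)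
      = finrank ℝ E / 4 * √π ^ finrank ℝ E * digamma (finrank ℝ E / 2 + 1) := by
  rcases subsingleton_or_nontrivial E with hE | hE
  · simp [Subsingleton.elim _ (0 : E), finrank_zero_of_subsingleton]
  rw [integral_fun_norm_addHaar volume fun r ↦ r ^ 2 * log r * exp (-r ^ 2)]
  set d := finrank ℝ E
  have hd : 0 < d := finrank_pos
  have hradial : ∫ r in Ioi 0, r ^ (d - 1) • (r ^ 2 * log r * exp (-r ^ 2))
      = deriv Gamma (d / 2 + 1) / 4 := by
    rw [show (d / 2 + 1 : ℝ) = ((d + 1 : ℝ) + 1) / 2 by ring,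
      ← integral_Ioi_rpow_mul_log_mul_exp_neg_sq (by linarith [d.cast_nonneg (α := ℝ)])]
    refine setIntegral_congr_fun measurableSet_Ioi fun r _ ↦ ?_
    rw [smul_eq_mul, ← mul_assoc, ← mul_assoc, ← pow_add, show d - 1 + 2 = d + 1 by omega,
      ← rpow_natCast, Nat.cast_add_one]
  have hball : volume.real (Metric.ball (0 : E) 1) = √π ^ d / Gamma (d / 2 + 1) := by
    rw [measureReal_def, InnerProductSpace.volume_ball, ENNReal.ofReal_one, one_pow, one_mul,
      ENNReal.toReal_ofReal (by positivity)]
  have hGamma : 0 < Gamma (d / 2 + 1) := Gamma_pos_of_pos (by positivity)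
  rw [hball, hradial, digamma, nsmul_eq_mul, smul_eq_mul]
  field_simp

namespace MeasurableEquiv

noncomputable def euclideanSpaceSumPiComplex (ι : Type*) :
    EuclideanSpace ℝ (ι ⊕ ι) ≃ᵐ (ι → ℂ) :=
  (MeasurableEquiv.toLp 2 (ι ⊕ ι → ℝ)).symm.trans <|
    (sumPiEquivProdPi fun _ ↦ ℝ).trans <|
      (arrowProdEquivProdArrow ℝ ℝ ι).symm.trans <|
        piCongrRight fun _ ↦ Complex.measurableEquivRealProd.symm

theorem euclideanSpaceSumPiComplex_apply {ι : Type*}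
    (x : EuclideanSpace ℝ (ι ⊕ ι)) (j : ι) :
    euclideanSpaceSumPiComplex ι x j = ⟨x (.inl j), x (.inr j)⟩ := rfl

theorem measurePreserving_euclideanSpaceSumPiComplex (ι : Type*) [Fintype ι] :
    MeasurePreserving (euclideanSpaceSumPiComplex ι) :=
  (volume_preserving_pi fun _ ↦
      Complex.volume_preserving_equiv_real_prod.symm Complex.measurableEquivRealProd).comp <|
    ((volume_measurePreserving_arrowProdEquivProdArrow ℝ ℝ ι).symm _).comp <|
      (volume_measurePreserving_sumPiEquivProdPi _).comp <|
        EuclideanSpace.volume_preserving_symm_measurableEquiv_toLp _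

theorem sum_sq_norm_euclideanSpaceSumPiComplex {ι : Type*} [Fintype ι]
    (x : EuclideanSpace ℝ (ι ⊕ ι)) :
    ∑ j, ‖euclideanSpaceSumPiComplex ι x j‖ ^ 2 = ‖x‖ ^ 2 := by
  rw [EuclideanSpace.norm_sq_eq, Fintype.sum_sum_type, ← Finset.sum_add_distrib]
  refine Finset.sum_congr rfl fun j _ ↦ ?_
  rw [euclideanSpaceSumPiComplex_apply, Complex.sq_norm, Complex.normSq_mk, Real.norm_eq_abs,
    Real.norm_eq_abs, sq_abs, sq_abs, sq, sq]

end MeasurableEquiv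

theorem expected_sq_norm_log_gaussian_vec (n : ℕ) :
    ∫ v, (∑ j, ‖(v j : ℂ)‖ ^ 2)
        * Real.log (Real.sqrt (∑ j, ‖(v j : ℂ)‖ ^ 2)) ∂(stdCGaussianVec n)
      = n * digamma (n + 1) / 2 := by
  have hdim : finrank ℝ (EuclideanSpace ℝ (Fin n ⊕ Fin n)) = 2 * n := by simp [two_mul]
  rw [integral_stdCGaussianVec, ← (MeasurableEquiv.measurePreserving_euclideanSpaceSumPiComplex
    (Fin n)).integral_comp (MeasurableEquiv.measurableEmbedding _)]
  simp only [MeasurableEquiv.sum_sq_norm_euclideanSpaceSumPiComplex, sqrt_sq (norm_nonneg _)]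
  rw [integral_sq_norm_mul_log_norm_mul_exp_neg_sq_norm, hdim, pow_mul, sq_sqrt pi_pos.le,
    inv_pow]
  push_cast
  field_simp
  ring
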